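/- Let κ be an infinite cardinal and T a (2,2,κ)-tree. Then the complement (2^ω × 2^ω) ∖ prjlim(T) of the κ-Souslin set prjlim(T) can be written as a union ⋃_{i<κ⁺} B_i of κ⁺ many κ-Borel subsets of 2^ω × 2^ω. -/

import Mathlib

/-!
A rank analysis. For a point `p`, the section `T(p) = {ρ | (p↾|ρ|, ρ) ∈ T}` is a tree on `κ`, and
`p ∉ prjlim T` says exactly that it has no infinite branch. The points whose root has rank `< α`
form a set defined by recursion on `α` from one clopen set by `κ`-fold intersections (over the
children) and `|α|`-fold unions, hence `κ`-Borel for `α < κ⁺`. Every node of `T(p)` has at most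
`κ` children and `κ⁺` is regular, so a node of rank `≥ κ⁺` has a child of rank `≥ κ⁺`; hence if
the root has no rank below `κ⁺`, dependent choice yields a branch.
-/

open FirstOrder Cardinal

namespace Sh522


/-- A `(2,2,κ)`-tree (with `κ` represented by the index type `ι`): a set of
triples `(σ, τ, ρ)` with `σ, τ ∈ 2^n`, `ρ ∈ ι^n`, closed under restriction. -/
structure Tree22 (ι : Type) : Type 1 where
  mem : ∀ n : ℕ, Set ((Fin n → Bool) × (Fin n → Bool) × (Fin n → ι))
  closed : ∀ (n : ℕ) (x : (Fin n → Bool) × (Fin n → Bool) × (Fin n → ι)),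
    x ∈ mem n → ∀ (m : ℕ) (h : m ≤ n),
      ((fun i => x.1 (Fin.castLE h i)), (fun i => x.2.1 (Fin.castLE h i)),
        (fun i => x.2.2 (Fin.castLE h i))) ∈ mem m

/-- The `κ`-Souslin set projected from a `(2,2,κ)`-tree:
`prjlim T = {(η,ν) : ∃ ρ ∈ ι^ω, ∀ n, (η↾n, ν↾n, ρ↾n) ∈ T}`. -/
def prjlim {ι : Type} (T : Tree22 ι) : Set ((ℕ → Bool) × (ℕ → Bool)) :=
  {p | ∃ ρ : ℕ → ι, ∀ n : ℕ,
    ((fun i : Fin n => p.1 i), (fun i : Fin n => p.2 i), (fun i : Fin n => ρ i)) ∈ T.mem n}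
/-- `κ`-Borel subsets of a topological space: the smallest family containing the
clopen sets and closed under unions and intersections of families of size `≤ κ`. -/
inductive KBorel (κ : Cardinal.{0}) {X : Type} [TopologicalSpace X] : Set X → Prop
  | clopen : ∀ s : Set X, IsClopen s → KBorel κ s
  | iUnion : ∀ (ι : Type) (f : ι → Set X), Cardinal.mk ι ≤ κ →
      (∀ i, KBorel κ (f i)) → KBorel κ (⋃ i, f i)
  | iInter : ∀ (ι : Type) (f : ι → Set X), Cardinal.mk ι ≤ κ →
      (∀ i, KBorel κ (f i)) → KBorel κ (⋂ i, f i)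

theorem snoc_restrict {α : Type*} (f : ℕ → α) (n : ℕ) :
    Fin.snoc (fun i : Fin n => f i) (f n) = fun i : Fin (n + 1) => f i :=
  Fin.snoc_init_self (fun i : Fin (n + 1) => f i)

theorem exists_branch {α : Type*} {P : (n : ℕ) → (Fin n → α) → Prop} (h0 : P 0 Fin.elim0)
    (hstep : ∀ n ρ, P n ρ → ∃ a, P (n + 1) (Fin.snoc ρ a)) :
    ∃ f : ℕ → α, ∀ n, P n (fun i : Fin n => f i) := by
  choose next hnext using hstep
  let node : (n : ℕ) → {ρ : Fin n → α // P n ρ} := fun n =>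
    Nat.rec ⟨Fin.elim0, h0⟩ (fun n ρ => ⟨Fin.snoc ρ.1 (next n ρ.1 ρ.2), hnext n ρ.1 ρ.2⟩) n
  let f : ℕ → α := fun n => next n (node n).1 (node n).2
  have hnode : ∀ n, (node n).1 = fun i : Fin n => f i := by
    intro n
    induction n with
    | zero => funext i; exact i.elim0
    | succ n ih =>
      change Fin.snoc (α := fun _ => α) (node n).1 (f n) = _
      rw [ih, snoc_restrict]
  exact ⟨f, fun n => hnode n ▸ (node n).2⟩

theorem iUnion_toType_eq_biUnion {X : Type*} (α : Ordinal.{0}) (s : Ordinal.{0} → Set X) :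
    ⋃ b : α.ToType, s b = ⋃ β < α, s β := by
  rw [← Set.iUnion_subtype (· < α) fun β => s β.1]
  exact Ordinal.ToType.mk.symm.toEquiv.iSup_comp (g := fun β : Set.Iio α => s β)

theorem isClopen_setOf_restrict_mem (n : ℕ) (S : Set ((Fin n → Bool) × (Fin n → Bool))) :
    IsClopen {p : (ℕ → Bool) × (ℕ → Bool) |
      ((fun i : Fin n => p.1 i), (fun i : Fin n => p.2 i)) ∈ S} := by
  have hcont : Continuous fun p : (ℕ → Bool) × (ℕ → Bool) =>
      ((fun i : Fin n => p.1 i), (fun i : Fin n => p.2 i)) := by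
    fun_prop
  exact (isClopen_discrete S).preimage hcont

namespace KBorel

variable {κ : Cardinal.{0}} {X : Type} [TopologicalSpace X]

theorem union (hκ : 2 ≤ κ) {s t : Set X} (hs : KBorel κ s) (ht : KBorel κ t) :
    KBorel κ (s ∪ t) := by
  rw [Set.union_eq_iUnion]
  refine iUnion Bool _ (by rwa [mk_bool]) fun b => ?_
  cases b <;> assumption

theorem biUnion_Iio {α : Ordinal.{0}} (hα : α.card ≤ κ) {s : Ordinal.{0} → Set X}
    (hs : ∀ β < α, KBorel κ (s β)) : KBorel κ (⋃ β < α, s β) := by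
  rw [← iUnion_toType_eq_biUnion]
  exact iUnion _ _ (by rwa [mk_toType]) fun b => hs b (Ordinal.typein_lt_self b)

end KBorel

section Rank

variable {ι : Type} (T : Tree22 ι)

/-- `p ∈ rankLt T α n ρ`: the node `ρ` of `T(p)` has rank `< α` (a non-node has rank `-1`). -/
noncomputable def rankLt (α : Ordinal.{0}) (n : ℕ) (ρ : Fin n → ι) :
    Set ((ℕ → Bool) × (ℕ → Bool)) :=
  {p | ((fun i : Fin n => p.1 i), (fun i : Fin n => p.2 i), ρ) ∉ T.mem n} ∪
    ⋂ i : ι, ⋃ β < α, rankLt β (n + 1) (Fin.snoc ρ i)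
termination_by α

theorem mem_rankLt {p : (ℕ → Bool) × (ℕ → Bool)} {α : Ordinal.{0}} {n : ℕ} {ρ : Fin n → ι} :
    p ∈ rankLt T α n ρ ↔
      ((fun i : Fin n => p.1 i), (fun i : Fin n => p.2 i), ρ) ∉ T.mem n ∨
        ∀ i, ∃ β < α, p ∈ rankLt T β (n + 1) (Fin.snoc ρ i) := by
  rw [rankLt]
  simp only [Set.mem_union, Set.mem_iInter, Set.mem_iUnion, exists_prop]
  rfl

theorem not_mem_rankLt_of_branch {p : (ℕ → Bool) × (ℕ → Bool)} {ρ : ℕ → ι}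
    (hρ : ∀ n, ((fun i : Fin n => p.1 i), (fun i : Fin n => p.2 i), (fun i : Fin n => ρ i)) ∈
      T.mem n) (α : Ordinal.{0}) (n : ℕ) : p ∉ rankLt T α n (fun i : Fin n => ρ i) := by
  induction α using WellFoundedLT.induction generalizing n with
  | _ α ih =>
    intro hp
    rcases (mem_rankLt T).1 hp with hnode | hchildren
    · exact hnode (hρ n)
    · obtain ⟨β, hβ, hchild⟩ := hchildren (ρ n)
      rw [snoc_restrict] at hchild
      exact ih β hβ (n + 1) hchild

theorem kBorel_rankLt {κ : Cardinal.{0}} (hκ : 2 ≤ κ) (hι : #ι ≤ κ) {α : Ordinal.{0}}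
    (hα : α.card ≤ κ) (n : ℕ) (ρ : Fin n → ι) : KBorel κ (rankLt T α n ρ) := by
  induction α using WellFoundedLT.induction generalizing n ρ with
  | _ α ih =>
    rw [rankLt]
    refine .union hκ (.clopen _ (isClopen_setOf_restrict_mem n {q | (q.1, q.2, ρ) ∉ T.mem n}))
      (.iInter ι _ hι fun i => .biUnion_Iio hα fun β hβ => ?_)
    exact ih β hβ ((Ordinal.card_le_card hβ.le).trans hα) _ _

/-- If all `#ι < c` children had rank below the regular `c`, so would the supremum of their
`rank + 1`, which bounds the rank of the node. -/
theorem exists_snoc_forall_not_mem_rankLt {c : Cardinal.{0}} (hc : c.IsRegular) (hι : #ι < c)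
    {p : (ℕ → Bool) × (ℕ → Bool)} {n : ℕ} {ρ : Fin n → ι}
    (hρ : ∀ α < c.ord, p ∉ rankLt T α n ρ) :
    ∃ i, ∀ α < c.ord, p ∉ rankLt T α (n + 1) (Fin.snoc ρ i) := by
  by_contra! h
  choose rank hrank hmem using h
  refine hρ (⨆ i, rank i + 1) (Ordinal.iSup_add_one_lt_of_lt_cof (by rwa [hc.cof_ord]) hrank) ?_
  exact (mem_rankLt T).2 <| .inr fun i => ⟨rank i, Ordinal.lt_iSup_add_one _ i, hmem i⟩

theorem exists_mem_rankLt_of_not_mem_prjlim {c : Cardinal.{0}} (hc : c.IsRegular) (hι : #ι < c)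
    {p : (ℕ → Bool) × (ℕ → Bool)} (hp : p ∉ prjlim T) :
    ∃ α < c.ord, p ∈ rankLt T α 0 Fin.elim0 := by
  by_contra! h
  obtain ⟨ρ, hρ⟩ := exists_branch (P := fun n ρ => ∀ α < c.ord, p ∉ rankLt T α n ρ) h
    fun _ _ => exists_snoc_forall_not_mem_rankLt T hc hι
  have hpos : 0 < c.ord := ord_pos.2 (aleph0_pos.trans_le hc.aleph0_le)
  exact hp ⟨ρ, fun n => not_not.1 fun hn => hρ n 0 hpos ((mem_rankLt T).2 (.inl hn))⟩

theorem compl_prjlim_eq_biUnion_rankLt {c : Cardinal.{0}} (hc : c.IsRegular) (hι : #ι < c) :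
    (prjlim T)ᶜ = ⋃ α < c.ord, rankLt T α 0 Fin.elim0 := by
  ext p
  simp only [Set.mem_compl_iff, Set.mem_iUnion, exists_prop]
  refine ⟨exists_mem_rankLt_of_not_mem_prjlim T hc hι, ?_⟩
  rintro ⟨α, -, hα⟩ ⟨ρ, hρ⟩
  refine not_mem_rankLt_of_branch T hρ α 0 ?_
  rwa [Subsingleton.elim (fun i : Fin 0 => ρ i) Fin.elim0]

end Rank

theorem stmt_17 (κ : Cardinal.{0}) (hκ : ℵ₀ ≤ κ)
    (ι : Type) (hι : Cardinal.mk ι = κ) (T : Tree22 ι) :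
    ∃ (J : Type) (_ : Cardinal.mk J = Order.succ κ)
      (B : J → Set ((ℕ → Bool) × (ℕ → Bool))),
      (∀ j, KBorel κ (B j)) ∧ (prjlim T)ᶜ = ⋃ j, B j := by
  have h2 : (2 : Cardinal) ≤ κ := ofNat_lt_aleph0.le.trans hκ
  have hcard (j : (Order.succ κ).ord.ToType) : (j : Ordinal).card ≤ κ :=
    Order.lt_succ_iff.1 (lt_ord.1 (Ordinal.typein_lt_self j))
  refine ⟨(Order.succ κ).ord.ToType, mk_ord_toType _, fun j => rankLt T j 0 Fin.elim0,
    fun j => kBorel_rankLt T h2 hι.le (hcard j) 0 Fin.elim0, ?_⟩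
  have hι_lt : #ι < Order.succ κ := hι ▸ Order.lt_succ κ
  exact (compl_prjlim_eq_biUnion_rankLt T (isRegular_succ hκ) hι_lt).trans
    (iUnion_toType_eq_biUnion _ _).symm

end Sh522
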